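/- Let f : ℝ² → ℝ be nowhere zero and a : ℝ² → ℝ arbitrary. Define on ℝ² × ℝ² (coordinates (q₁,q₂,p₁,p₂)) the matrix Ω(q,p) = (1/f(p)) · [[0,0,−1,0],[0,0,0,−1],[1,0,0,(a(p)/f(p))·J],[0,1,−(a(p)/f(p))·J,0]] with J = (q₁p₂−q₂p₁)/f(p), and let Φ : (0,∞) × ℝ × ℝ → ℝ⁴ be the parametrization Φ(r,ρ,θ) = (r·cosθ, r·sinθ, ρ·cosθ, ρ·sinθ) of the constraint surface J = 0. Then for every (r,ρ,θ) and all u, v ∈ ℝ³ (components ordered (u_r, u_ρ, u_θ)): (DΦ(r,ρ,θ)·u)ᵀ · Ω(Φ(r,ρ,θ)) · (DΦ(r,ρ,θ)·v) = −(1/f(ρ·cosθ, ρ·sinθ)) · (u_r·v_ρ − u_ρ·v_r). That is, the pullback of the deformed symplectic form to the constraint surface equals −(1/f(ρ)) dr ∧ dρ, and hence the reduced symplectic form on M ⫽ SO(2) in the natural coordinates (r,ρ) is ω̃ = −(1/f(ρ)) dr ∧ dρ. -/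

import Mathlib

open Matrix

/-- Deformed angular momentum `J(q,p) = (q₁p₂ − q₂p₁)/f(p)` on the phase space `ℝ⁴` with
coordinates `(q₁,q₂,p₁,p₂)`. -/
noncomputable def J2fun (f : (Fin 2 → ℝ) → ℝ) (x : Fin 4 → ℝ) : ℝ :=
  (x 0 * x 3 - x 1 * x 2) / f ![x 2, x 3]

/-- Matrix of the deformed symplectic form of the two-dimensional rotationally invariant GUP
theory in the coordinates `(q₁,q₂,p₁,p₂)`. -/
noncomputable def Omega2 (f a : (Fin 2 → ℝ) → ℝ) (x : Fin 4 → ℝ) : Matrix (Fin 4) (Fin 4) ℝ :=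
  (f ![x 2, x 3])⁻¹ •
    !![0, 0, -1, 0;
       0, 0, 0, -1;
       1, 0, 0, (a ![x 2, x 3] / f ![x 2, x 3]) * J2fun f x;
       0, 1, -((a ![x 2, x 3] / f ![x 2, x 3]) * J2fun f x), 0]

/-- Parametrization `Φ(r,ρ,θ) = (r·cosθ, r·sinθ, ρ·cosθ, ρ·sinθ)` of the constraint surface
`J = 0`. -/
noncomputable def Phi2 (y : Fin 3 → ℝ) : Fin 4 → ℝ :=
  ![y 0 * Real.cos (y 2), y 0 * Real.sin (y 2),
    y 1 * Real.cos (y 2), y 1 * Real.sin (y 2)]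

/-! On the constraint surface `J = 0` the `a`-dependent entries of `Ω` vanish, so `Ω ∘ Φ` is
`1/f(p)` times the canonical matrix `Ω₀`. Writing `q = r·e(θ)` and `p = ρ·e(θ)`, the tangent vector
`DΦ·u` has `q`-part `u_r·e + r·u_θ·e⊥` and `p`-part `u_ρ·e + ρ·u_θ·e⊥`; in `ξᵀΩ₀η = ξ_p·η_q − ξ_q·η_p`
the `θ`-contributions `rρ·u_θ·v_θ` cancel because `e ⊥ e⊥`, leaving `u_ρ·v_r − u_r·v_ρ`. -/

open Real

def Omega0 : Matrix (Fin 4) (Fin 4) ℝ :=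
  !![0, 0, -1, 0;
     0, 0, 0, -1;
     1, 0, 0, 0;
     0, 1, 0, 0]

theorem J2fun_Phi2 (f : (Fin 2 → ℝ) → ℝ) (y : Fin 3 → ℝ) : J2fun f (Phi2 y) = 0 := by
  rw [J2fun, div_eq_zero_iff]
  left
  simp only [Phi2, cons_val_zero, cons_val_one, cons_val]
  ring

theorem Omega2_eq_smul_Omega0 (f a : (Fin 2 → ℝ) → ℝ) {x : Fin 4 → ℝ} (hx : J2fun f x = 0) :
    Omega2 f a x = (f ![x 2, x 3])⁻¹ • Omega0 := by
  rw [Omega2, hx, mul_zero, neg_zero, Omega0]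

noncomputable def DPhi2 (y : Fin 3 → ℝ) : (Fin 3 → ℝ) →L[ℝ] (Fin 4 → ℝ) :=
  ContinuousLinearMap.pi
    ![cos (y 2) • .proj 0 - (y 0 * sin (y 2)) • .proj 2,
      sin (y 2) • .proj 0 + (y 0 * cos (y 2)) • .proj 2,
      cos (y 2) • .proj 1 - (y 1 * sin (y 2)) • .proj 2,
      sin (y 2) • .proj 1 + (y 1 * cos (y 2)) • .proj 2]

theorem hasFDerivAt_Phi2 (y : Fin 3 → ℝ) : HasFDerivAt Phi2 (DPhi2 y) y := by
  have hr := hasFDerivAt_apply (𝕜 := ℝ) (0 : Fin 3) y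
  have hρ := hasFDerivAt_apply (𝕜 := ℝ) (1 : Fin 3) y
  have hθ := hasFDerivAt_apply (𝕜 := ℝ) (2 : Fin 3) y
  have hcos := (hasDerivAt_cos (y 2)).comp_hasFDerivAt y hθ
  have hsin := (hasDerivAt_sin (y 2)).comp_hasFDerivAt y hθ
  rw [hasFDerivAt_pi']
  intro i
  fin_cases i
  · exact (hr.mul hcos).congr_fderiv (by ext u; simp [DPhi2]; ring)
  · exact (hr.mul hsin).congr_fderiv (by ext u; simp [DPhi2]; ring)
  · exact (hρ.mul hcos).congr_fderiv (by ext u; simp [DPhi2]; ring)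
  · exact (hρ.mul hsin).congr_fderiv (by ext u; simp [DPhi2]; ring)

theorem DPhi2_dotProduct_Omega0_mulVec (y u v : Fin 3 → ℝ) :
    DPhi2 y u ⬝ᵥ Omega0 *ᵥ DPhi2 y v = -(u 0 * v 1 - u 1 * v 0) := by
  simp only [DPhi2, Omega0, dotProduct, mulVec, Fin.sum_univ_four, ContinuousLinearMap.coe_pi',
    _root_.sub_apply, _root_.add_apply, _root_.smul_apply,
    ContinuousLinearMap.proj_apply, smul_eq_mul, of_apply, cons_val', cons_val_fin_one,
    cons_val_zero, cons_val_one, cons_val]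
  linear_combination (u 1 * v 0 - u 0 * v 1) * sin_sq_add_cos_sq (y 2)

theorem stmt_14 (f a : (Fin 2 → ℝ) → ℝ) :
    ∀ y : Fin 3 → ℝ, 0 < y 0 → ∀ u v : Fin 3 → ℝ,
      (fderiv ℝ Phi2 y u) ⬝ᵥ (Omega2 f a (Phi2 y)).mulVec (fderiv ℝ Phi2 y v) =
        -(1 / f ![y 1 * Real.cos (y 2), y 1 * Real.sin (y 2)]) * (u 0 * v 1 - u 1 * v 0) := by
  intro y _ u v
  rw [(hasFDerivAt_Phi2 y).fderiv, Omega2_eq_smul_Omega0 f a (J2fun_Phi2 f y), smul_mulVec,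
    dotProduct_smul, DPhi2_dotProduct_Omega0_mulVec]
  simp only [Phi2, cons_val, one_div]
  ring
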